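/- arXiv:2105.14436 — 6 statements merged into one kernel-verified Lean document; each statement's English description precedes it below -/
import Mathlib

section
/- Let p be a prime number with p ≡ 3 (mod 4), and let (z, t) be the fundamental solution of the Pell equation z² − p·t² = 1 (i.e., z, t are positive integers with z² − p·t² = 1 and z is minimal among all positive solutions). Then z + 1 and t are odd integers. Moreover, if p ≡ 7 (mod 8) then z + 1 is a perfect square, and if p ≡ 3 (mod 8) then z + 1 = p·m² for some integer m. -/
/-!
Since `(z - 1) * (z + 1) = p * t ^ 2`, coprimality splits the factors as a square and `p` times a
square. If `z = 2w + 1` were odd, then `t = 2u` and `w * (w + 1) = p * u ^ 2`: either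
`w + 1 = p * b ^ 2` with `w = a ^ 2`, making `-1` a square mod `p`, or `w + 1 = a ^ 2` with
`w = p * b ^ 2`, giving the smaller solution `(a, b)`. So `z` is even, `t` is odd and `z ± 1` are
coprime; which of them is the square is decided by whether `2` or `-2` is a square mod `p`.
-/

namespace Int

theorem exists_sq_of_isCoprime_of_nonneg {a b c : ℤ} (hab : IsCoprime a b) (ha : 0 ≤ a)
    (h : a * b = c ^ 2) : ∃ d : ℤ, a = d ^ 2 := by
  obtain ⟨d, hd | hd⟩ := Int.sq_of_isCoprime hab h
  · exact ⟨d, hd⟩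
  · exact ⟨d, by nlinarith [sq_nonneg d]⟩

theorem exists_sq_and_eq_mul_sq_of_dvd {p : ℕ} (hp : p ≠ 0) {x y t : ℤ} (hx : 0 ≤ x)
    (hy : 0 ≤ y) (hxy : IsCoprime x y) (h : x * y = p * t ^ 2) (hdvd : (p : ℤ) ∣ y) :
    ∃ a b : ℤ, x = a ^ 2 ∧ y = p * b ^ 2 := by
  obtain ⟨k, rfl⟩ := hdvd
  have hp0 : (0 : ℤ) < p := by exact_mod_cast Nat.pos_of_ne_zero hp
  have hk : 0 ≤ k := nonneg_of_mul_nonneg_right hy hp0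
  have hxk : x * k = t ^ 2 := mul_left_cancel₀ hp0.ne' (by linear_combination h)
  have hcop : IsCoprime x k := hxy.of_mul_right_right
  obtain ⟨a, rfl⟩ := exists_sq_of_isCoprime_of_nonneg hcop hx hxk
  obtain ⟨b, rfl⟩ := exists_sq_of_isCoprime_of_nonneg hcop.symm hk (by rw [mul_comm, hxk])
  exact ⟨a, b, rfl, rfl⟩

theorem exists_sq_and_eq_mul_sq_or {p : ℕ} (hp : p.Prime) {x y t : ℤ} (hx : 0 ≤ x)
    (hy : 0 ≤ y) (hxy : IsCoprime x y) (h : x * y = p * t ^ 2) :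
    (∃ a b : ℤ, x = a ^ 2 ∧ y = p * b ^ 2) ∨
      (∃ a b : ℤ, x = p * b ^ 2 ∧ y = a ^ 2) := by
  rcases (Nat.prime_iff_prime_int.mp hp).dvd_mul.mp ⟨t ^ 2, h⟩ with hdx | hdy
  · obtain ⟨a, b, hya, hxb⟩ :=
      exists_sq_and_eq_mul_sq_of_dvd hp.ne_zero hy hx hxy.symm (by rw [mul_comm, h]) hdx
    exact Or.inr ⟨a, b, hxb, hya⟩
  · exact Or.inl (exists_sq_and_eq_mul_sq_of_dvd hp.ne_zero hx hy hxy h hdy)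

end Int

theorem ZMod.isSquare_intCast_of_dvd_sq_sub {n : ℕ} {a c : ℤ} (h : (n : ℤ) ∣ a ^ 2 - c) :
    IsSquare (c : ZMod n) :=
  ⟨a, by rw [(ZMod.intCast_eq_intCast_iff_dvd_sub _ _ _).2 h]; push_cast; ring⟩

section NonResidues

variable {p : ℕ} [Fact p.Prime]

theorem not_dvd_sq_add_one_of_mod_four_eq_three (hp : p % 4 = 3) (a : ℤ) :
    ¬(p : ℤ) ∣ a ^ 2 + 1 := fun h => by
  have hsq := ZMod.isSquare_intCast_of_dvd_sq_sub (c := -1) (by simpa using h)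
  rw [Int.cast_neg, Int.cast_one, ZMod.exists_sq_eq_neg_one_iff] at hsq
  exact hsq hp

theorem not_dvd_sq_add_two_of_mod_eight (hp : p % 8 = 5 ∨ p % 8 = 7) (a : ℤ) :
    ¬(p : ℤ) ∣ a ^ 2 + 2 := fun h => by
  have hsq := ZMod.isSquare_intCast_of_dvd_sq_sub (c := -2) (by simpa using h)
  rw [Int.cast_neg, Int.cast_ofNat, ZMod.exists_sq_eq_neg_two_iff (by omega)] at hsq
  omega

theorem not_dvd_sq_sub_two_of_mod_eight (hp : p % 8 = 3 ∨ p % 8 = 5) (a : ℤ) :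
    ¬(p : ℤ) ∣ a ^ 2 - 2 := fun h => by
  have hsq := ZMod.isSquare_intCast_of_dvd_sq_sub (c := 2) h
  rw [Int.cast_ofNat, ZMod.exists_sq_eq_two_iff (by omega)] at hsq
  omega

end NonResidues

theorem odd_of_sq_sub_mul_sq_eq_one_of_even {d z t : ℤ} (hz : Even z)
    (h : z ^ 2 - d * t ^ 2 = 1) : Odd t := by
  rw [← Int.not_even_iff_odd]
  rintro ⟨u, rfl⟩
  obtain ⟨w, rfl⟩ := hz
  have : 4 * (w ^ 2 - d * u ^ 2) = 1 := by linear_combination h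
  omega

theorem even_of_sq_sub_mul_sq_eq_one_of_odd {d z t : ℤ} (hd : Odd d) (hz : Odd z)
    (h : z ^ 2 - d * t ^ 2 = 1) : Even t := by
  have hdt : Even (d * t ^ 2) := by
    rw [show d * t ^ 2 = z ^ 2 - 1 by linarith]
    exact hz.pow.sub_odd odd_one
  exact (Int.even_pow.1 ((Int.even_mul.1 hdt).resolve_left (Int.not_even_iff_odd.2 hd))).1

theorem even_of_minimal_pell {p : ℕ} (hp : p.Prime) (hp4 : p % 4 = 3) {z t : ℤ} (hz : 0 < z)
    (ht : 0 < t) (hpell : z ^ 2 - p * t ^ 2 = 1)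
    (hmin : ∀ z' t' : ℤ, 0 < z' → 0 < t' → z' ^ 2 - p * t' ^ 2 = 1 → z ≤ z') :
    Even z := by
  have := Fact.mk hp
  by_contra hzeven
  have hzodd := Int.not_even_iff_odd.1 hzeven
  have hpodd : Odd (p : ℤ) := by
    rw [Int.odd_coe_nat, Nat.odd_iff]
    omega
  obtain ⟨u, rfl⟩ := even_of_sq_sub_mul_sq_eq_one_of_odd hpodd hzodd hpell
  obtain ⟨w, rfl⟩ := hzodd
  have hprod : w * (w + 1) = p * u ^ 2 :=
    mul_left_cancel₀ four_ne_zero (by linear_combination hpell)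
  have hw : 0 < w := by
    have : (0 : ℤ) < p * u ^ 2 := mul_pos (by exact_mod_cast hp.pos) (pow_pos (by omega) 2)
    nlinarith
  rcases Int.exists_sq_and_eq_mul_sq_or hp hw.le (by omega) ⟨-1, 1, by ring⟩ hprod with
    ⟨a, b, rfl, hb⟩ | ⟨a, b, rfl, ha⟩
  · exact not_dvd_sq_add_one_of_mod_four_eq_three hp4 a ⟨b ^ 2, hb⟩
  · have hb : 0 < |b| := abs_pos.2 (by rintro rfl; simp at hw)
    have hsmaller := hmin |a| |b| (abs_pos.2 (by rintro rfl; simp at ha; omega)) hb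
      (by rw [sq_abs, sq_abs]; linarith)
    have : |a| ≤ a ^ 2 := by rw [← sq_abs]; exact Int.le_self_sq _
    linarith

theorem pell_fundamental_solution_props (p : ℕ) (hp : p.Prime) (hp4 : p % 4 = 3)
    (z t : ℤ) (hz : 0 < z) (ht : 0 < t) (hpell : z ^ 2 - (p : ℤ) * t ^ 2 = 1)
    (hmin : ∀ z' t' : ℤ, 0 < z' → 0 < t' → z' ^ 2 - (p : ℤ) * t' ^ 2 = 1 → z ≤ z') :
    Odd (z + 1) ∧ Odd t ∧
      (p % 8 = 7 → ∃ s : ℤ, z + 1 = s ^ 2) ∧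
      (p % 8 = 3 → ∃ m : ℤ, z + 1 = (p : ℤ) * m ^ 2) := by
  have := Fact.mk hp
  have hzeven := even_of_minimal_pell hp hp4 hz ht hpell hmin
  refine ⟨hzeven.add_one, odd_of_sq_sub_mul_sq_eq_one_of_even hzeven hpell, ?_⟩
  obtain ⟨w, hw⟩ := hzeven
  have hcop : IsCoprime (z - 1) (z + 1) := ⟨w, 1 - w, by rw [hw]; ring⟩
  rcases Int.exists_sq_and_eq_mul_sq_or hp (by omega) (by omega) hcop (t := t)
      (by linear_combination hpell) with ⟨a, b, ha, hb⟩ | ⟨a, b, hb, ha⟩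
  · refine ⟨fun h8 => ?_, fun _ => ⟨b, hb⟩⟩
    exfalso
    exact not_dvd_sq_add_two_of_mod_eight (.inr h8) a ⟨b ^ 2, by linear_combination hb - ha⟩
  · refine ⟨fun _ => ⟨a, ha⟩, fun h8 => ?_⟩
    exfalso
    exact not_dvd_sq_sub_two_of_mod_eight (.inl h8) a ⟨b ^ 2, by linear_combination hb - ha⟩
end

section
/- Let p and q be distinct prime numbers with p ≡ 1 (mod 4), q ≡ 1 (mod 4), and Legendre symbol (p/q) = −1. Then the negative Pell equation x² − pq·y² = −1 has a solution in integers x, y. -/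
/-!
Let `(X, Y)` be the fundamental solution of `x² - pq y² = 1`. Since `pq ≡ 1 (mod 4)`, `X = 2m + 1`
and `Y = 2z` with `m (m + 1) = pq z²`, so the coprime factors split as `m = A a²`, `m + 1 = B b²`
with `AB = pq`. If `{A, B} = {p, q}`, then `q b² ≡ 1 (mod p)` or `p b² ≡ 1 (mod q)`, so by
reciprocity `(p/q) = 1`. If `A = pq`, then `(b, a)` solves the positive equation with
`X = 2b² - 1`, the `x`-coordinate of `(b + a√pq)²`, contradicting minimality of `X`.
Hence `A = 1`, and `a² - pq b² = -1`.
-/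

theorem Nat.Prime.not_isSquare_mul {p q : ℕ} (hp : p.Prime) (hq : q.Prime) (hpq : p ≠ q) :
    ¬IsSquare (p * q) := by
  rintro ⟨r, hr⟩
  obtain ⟨s, rfl⟩ : p ∣ r := (hp.dvd_mul.mp (hr ▸ dvd_mul_right p q)).elim id id
  have hq_eq : q = p * (s * s) :=
    mul_left_cancel₀ hp.ne_zero (by rw [hr]; ring)
  exact hpq ((Nat.prime_dvd_prime_iff_eq hp hq).mp ⟨s * s, hq_eq⟩)

theorem Int.exists_sq_of_isCoprime_of_pos {u v c : ℤ} (huv : IsCoprime u v) (hu : 0 < u)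
    (h : u * v = c ^ 2) : ∃ a, u = a ^ 2 := by
  obtain ⟨a, ha | ha⟩ := Int.sq_of_isCoprime huv h
  · exact ⟨a, ha⟩
  · nlinarith [sq_nonneg a]

theorem Int.exists_eq_mul_sq_of_isCoprime {u v A B z : ℤ} (huv : IsCoprime u v)
    (hu : 0 < u) (hv : 0 < v) (hA : 0 < A) (hB : 0 < B) (hAu : A ∣ u) (hBv : B ∣ v)
    (h : u * v = A * B * z ^ 2) : ∃ a b, u = A * a ^ 2 ∧ v = B * b ^ 2 := by
  obtain ⟨u', rfl⟩ := hAu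
  obtain ⟨v', rfl⟩ := hBv
  have huv' : IsCoprime u' v' := huv.of_mul_left_right.of_mul_right_right
  have h' : u' * v' = z ^ 2 :=
    mul_left_cancel₀ (mul_pos hA hB).ne' (by linear_combination h)
  obtain ⟨a, ha⟩ := exists_sq_of_isCoprime_of_pos huv' (pos_of_mul_pos_right hu hA.le) h'
  obtain ⟨b, hb⟩ := exists_sq_of_isCoprime_of_pos huv'.symm (pos_of_mul_pos_right hv hB.le)
    (by rw [mul_comm, h'])
  exact ⟨a, b, by rw [ha], by rw [hb]⟩

theorem Int.sq_emod_four_eq_zero_of_even {x : ℤ} (hx : Even x) : x ^ 2 % 4 = 0 := by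
  obtain ⟨k, rfl⟩ := hx
  rw [show (k + k) ^ 2 = 4 * k ^ 2 by ring]; omega

theorem exists_eq_two_mul_add_one_of_sq_sub_mul_sq_eq_one {d x y : ℤ} (hd : d % 4 = 1)
    (h : x ^ 2 - d * y ^ 2 = 1) :
    ∃ m z, x = 2 * m + 1 ∧ y = 2 * z ∧ m * (m + 1) = d * z ^ 2 := by
  obtain ⟨z, rfl⟩ : Even y := by
    refine Int.not_odd_iff_even.mp fun hy => ?_
    have hdy : d * y ^ 2 % 4 = 1 := by
      rw [Int.mul_emod, hd, Int.sq_mod_four_eq_one_of_odd hy]; rfl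
    rcases Int.even_or_odd x with hx | hx
    · have := Int.sq_emod_four_eq_zero_of_even hx; omega
    · have := Int.sq_mod_four_eq_one_of_odd hx; omega
  obtain ⟨m, rfl⟩ : Odd x := by
    refine Int.not_even_iff_odd.mp fun hx => ?_
    have := Int.sq_emod_four_eq_zero_of_even hx
    have : x ^ 2 = 4 * (d * z ^ 2) + 1 := by linear_combination h
    omega
  refine ⟨m, z, rfl, (two_mul z).symm, mul_left_cancel₀ four_ne_zero ?_⟩
  linear_combination h

theorem legendreSym_eq_one_of_mul_sq_eq_mul_sq_add_one {p : ℕ} [Fact p.Prime] {c a b : ℤ}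
    (h : c * b ^ 2 = p * a ^ 2 + 1) : legendreSym p c = 1 := by
  have hcb : (c : ZMod p) * (b : ZMod p) ^ 2 = 1 := by
    have h' := congrArg (fun t : ℤ => (t : ZMod p)) h
    push_cast at h'
    rwa [ZMod.natCast_self, zero_mul, zero_add] at h'
  have hc : (c : ZMod p) ≠ 0 := fun hc => by simp [hc] at hcb
  exact legendreSym.eq_one_of_sq_sub_mul_sq_eq_zero' hc one_ne_zero (y := (b : ZMod p))
    (by rw [one_pow, hcb, sub_self])

theorem Pell.IsFundamental.x_ne_two_mul_sq_sub_one {d : ℤ} {a : Pell.Solution₁ d}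
    (ha : Pell.IsFundamental a) (b : Pell.Solution₁ d) : a.x ≠ 2 * b.x ^ 2 - 1 := by
  intro hab
  let c : Pell.Solution₁ d := .mk |b.x| b.y (by rw [sq_abs]; exact b.prop)
  have hc : 1 < |b.x| := (one_lt_sq_iff_one_lt_abs _).mp (by linarith [ha.1])
  have hle : a.x ≤ |b.x| := ha.x_le_x (a := c) hc
  nlinarith [sq_abs b.x]

theorem exists_sq_split_of_mul_add_one_eq_mul_mul_sq {p q : ℕ} [Fact p.Prime] [Fact q.Prime] (hpq : p ≠ q)
    (hp : p % 4 = 1) (hq : q ≠ 2) (hleg : legendreSym q (p : ℤ) = -1) {m z : ℤ} (hm : 0 < m)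
    (h : m * (m + 1) = p * q * z ^ 2) :
    (∃ a b, m = p * q * a ^ 2 ∧ m + 1 = b ^ 2) ∨ (∃ a b, m = a ^ 2 ∧ m + 1 = p * q * b ^ 2) := by
  have hp' : Prime (p : ℤ) := Nat.prime_iff_prime_int.mp Fact.out
  have hq' : Prime (q : ℤ) := Nat.prime_iff_prime_int.mp Fact.out
  have hpq' : IsCoprime (p : ℤ) q :=
    Nat.isCoprime_iff_coprime.mpr ((Nat.coprime_primes Fact.out Fact.out).mpr hpq)
  have hm1 : IsCoprime m (m + 1) := ⟨-1, 1, by ring⟩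
  have hp0 : (0 : ℤ) < p := mod_cast (Fact.out : p.Prime).pos
  have hq0 : (0 : ℤ) < q := mod_cast (Fact.out : q.Prime).pos
  have hlegpq (a b : ℤ) (hab : (q : ℤ) * b ^ 2 = p * a ^ 2 + 1) : False := by
    have := legendreSym_eq_one_of_mul_sq_eq_mul_sq_add_one hab
    rw [← legendreSym.quadratic_reciprocity_one_mod_four hp hq, hleg] at this
    exact absurd this (by decide)
  have hlegqp (a b : ℤ) (hab : (p : ℤ) * b ^ 2 = q * a ^ 2 + 1) : False := by
    rw [legendreSym_eq_one_of_mul_sq_eq_mul_sq_add_one hab] at hleg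
    exact absurd hleg (by decide)
  have hdvd : (p : ℤ) * q ∣ m * (m + 1) := h ▸ dvd_mul_right _ _
  rcases hp'.dvd_or_dvd (dvd_of_mul_right_dvd hdvd) with hpm | hpm <;>
    rcases hq'.dvd_or_dvd (dvd_of_mul_left_dvd hdvd) with hqm | hqm
  · obtain ⟨a, b, ha, hb⟩ := Int.exists_eq_mul_sq_of_isCoprime hm1 hm (by omega)
      (mul_pos hp0 hq0) one_pos (hpq'.mul_dvd hpm hqm) (one_dvd _) (by rw [h, mul_one])
    exact .inl ⟨a, b, ha, by rw [hb, one_mul]⟩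
  · obtain ⟨a, b, ha, hb⟩ := Int.exists_eq_mul_sq_of_isCoprime hm1 hm (by omega)
      hp0 hq0 hpm hqm h
    exact (hlegpq a b (by linear_combination ha - hb)).elim
  · obtain ⟨a, b, ha, hb⟩ := Int.exists_eq_mul_sq_of_isCoprime hm1 hm (by omega)
      hq0 hp0 hqm hpm (z := z) (by linear_combination h)
    exact (hlegqp a b (by linear_combination ha - hb)).elim
  · obtain ⟨a, b, ha, hb⟩ := Int.exists_eq_mul_sq_of_isCoprime hm1 hm (by omega)
      one_pos (mul_pos hp0 hq0) (one_dvd _) (hpq'.mul_dvd hpm hqm) (by rw [h, one_mul])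
    exact .inr ⟨a, b, by rw [ha, one_mul], hb⟩

theorem negative_pell_solvable (p q : ℕ) [Fact p.Prime] [Fact q.Prime] (hpq : p ≠ q)
    (hp : p % 4 = 1) (hq : q % 4 = 1) (hleg : legendreSym q (p : ℤ) = -1) :
    ∃ x y : ℤ, x ^ 2 - (p : ℤ) * q * y ^ 2 = -1 := by
  have hnsq : ¬IsSquare ((p : ℤ) * q) := by
    rw [← Nat.cast_mul, Int.isSquare_natCast_iff]
    exact Nat.Prime.not_isSquare_mul Fact.out Fact.out hpq
  have hd : ((p : ℤ) * q) % 4 = 1 := by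
    rw [Int.mul_emod, show (p : ℤ) % 4 = 1 by omega, show (q : ℤ) % 4 = 1 by omega]; rfl
  have hpos : 0 < (p : ℤ) * q :=
    mul_pos (mod_cast (Fact.out : p.Prime).pos) (mod_cast (Fact.out : q.Prime).pos)
  obtain ⟨a, ha⟩ := Pell.IsFundamental.exists_of_not_isSquare hpos hnsq
  obtain ⟨m, z, hx, -, hmz⟩ := exists_eq_two_mul_add_one_of_sq_sub_mul_sq_eq_one hd a.prop
  have hm : 0 < m := by linarith [ha.1]
  rcases exists_sq_split_of_mul_add_one_eq_mul_mul_sq hpq hp (by omega) hleg hm hmz with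
    ⟨s, t, hs, ht⟩ | ⟨s, t, hs, ht⟩
  · refine absurd ?_ (ha.x_ne_two_mul_sq_sub_one (.mk t s (by linear_combination hs - ht)))
    rw [hx, Pell.Solution₁.x_mk]
    linear_combination 2 * ht
  · exact ⟨s, t, by linear_combination ht - hs⟩
end

section
/- Let p, q, r be distinct prime numbers with p ≡ 3 (mod 4), q ≡ 1 (mod 8), r ≡ 1 (mod 8), and Legendre symbol (q/r) = −1. Suppose z and t are integers with z > 0 satisfying z² − pqr·t² = 1. Then there exist an integer m and ε ∈ {1, p, qr, pqr} such that either z + 1 = ε·m² or z + 1 = 2·ε·m². -/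
/-!
Write `z + 1` and `z - 1` (both halved when `z` is odd, in which case `t` is even) as coprime
positive integers `U`, `V` with `U - V ∈ {1, 2}` and `U * V = p * q * r * T ^ 2`. Coprimality
forces `U = ε * a ^ 2` and `V = ε' * b ^ 2` with `ε * ε' = p * q * r`. The one of `U`, `V` not
divisible by `p` is `a ^ 2`, `q * r * a ^ 2`, `q * a ^ 2` or `r * a ^ 2`, and the last two
cannot occur: modulo the prime `ℓ ∈ {q, r}` dividing the other factor, the remaining prime
times a square is `±1` or `±2`, which are nonzero squares modulo a prime `≡ 1 (mod 8)`, so that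
prime would be a square modulo `ℓ`, whereas `(q / r) = (r / q) = -1` by quadratic reciprocity.
-/

lemma isSquare_of_mul_sq_eq {F : Type*} [Field F] {u x s : F} (hs : s ≠ 0) (hsq : IsSquare s)
    (h : u * x ^ 2 = s) : IsSquare u := by
  have hx : x ≠ 0 := by
    rintro rfl
    exact hs (by simpa using h.symm)
  rw [eq_div_of_mul_eq (pow_ne_zero 2 hx) h]
  exact hsq.div (IsSquare.sq x)

namespace ZMod

variable {ℓ : ℕ} [Fact ℓ.Prime]

lemma isSquare_intCast_of_abs_le_two (hℓ : ℓ % 8 = 1) {c : ℤ} (hc : |c| ≤ 2) :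
    IsSquare (c : ZMod ℓ) := by
  have hneg : IsSquare (-1 : ZMod ℓ) := exists_sq_eq_neg_one_iff.mpr (by omega)
  have htwo : IsSquare (2 : ZMod ℓ) := (exists_sq_eq_two_iff (by omega)).mpr (Or.inl hℓ)
  obtain rfl | rfl | rfl | rfl | rfl : c = -2 ∨ c = -1 ∨ c = 0 ∨ c = 1 ∨ c = 2 := by
    rw [abs_le] at hc
    omega
  · simpa using hneg.mul htwo
  · simpa using hneg
  · simp
  · simp
  · simpa using htwo

lemma intCast_ne_zero_of_abs_le_two (hℓ : ℓ % 8 = 1) {c : ℤ} (hc0 : c ≠ 0) (hc : |c| ≤ 2) :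
    (c : ZMod ℓ) ≠ 0 := by
  rw [Ne, intCast_zmod_eq_zero_iff_dvd, ← Int.natAbs_dvd_natAbs, Int.natAbs_natCast]
  intro hdvd
  have hℓc := Nat.le_of_dvd (Int.natAbs_pos.mpr hc0) hdvd
  have hℓ9 : 9 ≤ ℓ := by
    have := (Fact.out : ℓ.Prime).two_le
    omega
  rw [Int.abs_eq_natAbs] at hc
  omega

end ZMod

lemma natCast_mul_sq_sub_natCast_mul_ne {ℓ ℓ' : ℕ} [Fact ℓ'.Prime] (hℓ' : ℓ' % 8 = 1)
    (hns : ¬IsSquare (ℓ : ZMod ℓ')) {c : ℤ} (hc0 : c ≠ 0) (hc : |c| ≤ 2) (a k : ℤ) :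
    (ℓ : ℤ) * a ^ 2 - ℓ' * k ≠ c := by
  intro h
  have hmod : (ℓ : ZMod ℓ') * (a : ZMod ℓ') ^ 2 = c := by
    rw [← h]
    push_cast
    rw [ZMod.natCast_self, zero_mul, sub_zero]
  exact hns (isSquare_of_mul_sq_eq (ZMod.intCast_ne_zero_of_abs_le_two hℓ' hc0 hc)
    (ZMod.isSquare_intCast_of_abs_le_two hℓ' hc) hmod)

lemma Int.exists_eq_mul_sq_of_isCoprime_s10 {U V e e' T : ℤ} (he : 0 < e) (he' : e' ≠ 0)
    (hU : 0 < U) (hco : IsCoprime U V) (heU : e ∣ U) (he'V : e' ∣ V)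
    (h : U * V = e * e' * T ^ 2) : ∃ a, U = e * a ^ 2 := by
  obtain ⟨U₁, rfl⟩ := heU
  obtain ⟨V₁, rfl⟩ := he'V
  have hprod : U₁ * V₁ = T ^ 2 :=
    mul_left_cancel₀ (mul_ne_zero he.ne' he') (by linear_combination h)
  obtain ⟨a, ha | ha⟩ := Int.sq_of_isCoprime hco.of_mul_left_right.of_mul_right_right hprod
  · exact ⟨a, by rw [ha]⟩
  · rw [ha] at hU
    nlinarith [sq_nonneg a]

lemma Nat.isCoprime_intCast_of_prime {m n : ℕ} (hm : m.Prime) (hn : n.Prime) (hmn : m ≠ n) :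
    IsCoprime (m : ℤ) n :=
  Nat.isCoprime_iff_coprime.mpr ((Nat.coprime_primes hm hn).mpr hmn)

section SquareClass

variable (p q r : ℕ) [hP : Fact p.Prime] [hQ : Fact q.Prime] [hR : Fact r.Prime]

lemma eq_sq_or_eq_mul_sq_of_dvd_right (hpq : p ≠ q) (hpr : p ≠ r) (hqr : q ≠ r)
    (hq : q % 8 = 1) (hr : r % 8 = 1)
    (hqr_sq : ¬IsSquare (q : ZMod r)) (hrq_sq : ¬IsSquare (r : ZMod q))
    {W W' T c : ℤ} (hc0 : c ≠ 0) (hc : |c| ≤ 2) (hW : 0 < W) (hW' : 0 < W')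
    (hco : IsCoprime W W') (hsub : W - W' = c) (hpW' : (p : ℤ) ∣ W')
    (h : W * W' = p * q * r * T ^ 2) :
    ∃ a b : ℤ, (W = a ^ 2 ∧ W' = p * q * r * b ^ 2) ∨ (W = q * r * a ^ 2 ∧ W' = p * b ^ 2) := by
  have hp0 : (0 : ℤ) < p := Nat.cast_pos.mpr hP.out.pos
  have hq0 : (0 : ℤ) < q := Nat.cast_pos.mpr hQ.out.pos
  have hr0 : (0 : ℤ) < r := Nat.cast_pos.mpr hR.out.pos
  have hcpq := Nat.isCoprime_intCast_of_prime hP.out hQ.out hpq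
  have hcpr := Nat.isCoprime_intCast_of_prime hP.out hR.out hpr
  have hcqr := Nat.isCoprime_intCast_of_prime hQ.out hR.out hqr
  have hq_dvd : (q : ℤ) ∣ W * W' := ⟨p * r * T ^ 2, by linear_combination h⟩
  have hr_dvd : (r : ℤ) ∣ W * W' := ⟨p * q * T ^ 2, by linear_combination h⟩
  rcases (Nat.prime_iff_prime_int.mp hQ.out).dvd_or_dvd hq_dvd with hqW | hqW' <;>
    rcases (Nat.prime_iff_prime_int.mp hR.out).dvd_or_dvd hr_dvd with hrW | hrW'
  · obtain ⟨a, ha⟩ := Int.exists_eq_mul_sq_of_isCoprime_s10 (e := q * r) (e' := p) (T := T)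
      (by positivity) hp0.ne' hW hco (hcqr.mul_dvd hqW hrW) hpW' (by linear_combination h)
    obtain ⟨b, hb⟩ := Int.exists_eq_mul_sq_of_isCoprime_s10 (e := p) (e' := q * r) (T := T)
      hp0 (by positivity) hW' hco.symm hpW' (hcqr.mul_dvd hqW hrW) (by linear_combination h)
    exact ⟨a, b, Or.inr ⟨ha, hb⟩⟩
  · obtain ⟨a, rfl⟩ := Int.exists_eq_mul_sq_of_isCoprime_s10 (e := q) (e' := p * r) (T := T)
      hq0 (by positivity) hW hco hqW (hcpr.mul_dvd hpW' hrW') (by linear_combination h)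
    obtain ⟨k, rfl⟩ := hrW'
    exact absurd hsub (natCast_mul_sq_sub_natCast_mul_ne hr hqr_sq hc0 hc a k)
  · obtain ⟨a, rfl⟩ := Int.exists_eq_mul_sq_of_isCoprime_s10 (e := r) (e' := p * q) (T := T)
      hr0 (by positivity) hW hco hrW (hcpq.mul_dvd hpW' hqW') (by linear_combination h)
    obtain ⟨k, rfl⟩ := hqW'
    exact absurd hsub (natCast_mul_sq_sub_natCast_mul_ne hq hrq_sq hc0 hc a k)
  · have hpqr : (p : ℤ) * q * r ∣ W' := (hcpr.mul_left hcqr).mul_dvd (hcpq.mul_dvd hpW' hqW') hrW'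
    obtain ⟨a, ha⟩ := Int.exists_eq_mul_sq_of_isCoprime_s10 (e := 1) (e' := p * q * r) (T := T)
      one_pos (by positivity) hW hco (one_dvd W) hpqr (by linear_combination h)
    obtain ⟨b, hb⟩ := Int.exists_eq_mul_sq_of_isCoprime_s10 (e := p * q * r) (e' := 1) (T := T)
      (by positivity) one_ne_zero hW' hco.symm hpqr (one_dvd W) (by linear_combination h)
    exact ⟨a, b, Or.inl ⟨by linear_combination ha, hb⟩⟩

lemma exists_eq_mul_sq_of_sub_eq (hpq : p ≠ q) (hpr : p ≠ r) (hqr : q ≠ r)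
    (hq : q % 8 = 1) (hr : r % 8 = 1) (hqr_sq : ¬IsSquare (q : ZMod r))
    {U V T c : ℤ} (hc0 : c ≠ 0) (hc : |c| ≤ 2) (hU : 0 < U) (hV : 0 < V)
    (hco : IsCoprime U V) (hsub : U - V = c) (h : U * V = p * q * r * T ^ 2) :
    ∃ a : ℤ, ∃ ε ∈ ({1, (p : ℤ), (q : ℤ) * r, (p : ℤ) * q * r} : Set ℤ), U = ε * a ^ 2 := by
  have hrq_sq : ¬IsSquare (r : ZMod q) :=
    mt (ZMod.exists_sq_eq_prime_iff_of_mod_four_eq_one (by omega) (by omega)).mpr hqr_sq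
  have hp_dvd : (p : ℤ) ∣ U * V := ⟨q * r * T ^ 2, by linear_combination h⟩
  rcases (Nat.prime_iff_prime_int.mp hP.out).dvd_or_dvd hp_dvd with hpU | hpV
  · obtain ⟨a, b, ⟨-, hb⟩ | ⟨-, hb⟩⟩ := eq_sq_or_eq_mul_sq_of_dvd_right p q r hpq hpr hqr hq hr
      hqr_sq hrq_sq (T := T) (neg_ne_zero.mpr hc0) (by rwa [abs_neg]) hV hU hco.symm
      (by linear_combination -hsub) hpU (by linear_combination h)
    · exact ⟨b, _, by simp, hb⟩
    · exact ⟨b, _, by simp, hb⟩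
  · obtain ⟨a, b, ⟨ha, -⟩ | ⟨ha, -⟩⟩ := eq_sq_or_eq_mul_sq_of_dvd_right p q r hpq hpr hqr hq hr
      hqr_sq hrq_sq hc0 hc hU hV hco hsub hpV h
    · exact ⟨a, 1, by simp, by rw [ha, one_mul]⟩
    · exact ⟨a, _, by simp, ha⟩

end SquareClass

theorem norm_one_unit_square_class (p q r : ℕ)
    [Fact p.Prime] [Fact q.Prime] [Fact r.Prime]
    (hpq : p ≠ q) (hpr : p ≠ r) (hqr : q ≠ r)
    (hp : p % 4 = 3) (hq : q % 8 = 1) (hr : r % 8 = 1)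
    (hleg : legendreSym r (q : ℤ) = -1)
    (z t : ℤ) (hz : 0 < z) (hpell : z ^ 2 - (p : ℤ) * q * r * t ^ 2 = 1) :
    ∃ m : ℤ, ∃ ε ∈ ({1, (p : ℤ), (q : ℤ) * r, (p : ℤ) * q * r} : Set ℤ),
      z + 1 = ε * m ^ 2 ∨ z + 1 = 2 * ε * m ^ 2 := by
  obtain rfl | hz1 : z = 1 ∨ 1 < z := by omega
  · exact ⟨1, 1, by simp, Or.inr (by norm_num)⟩
  have hqr_sq : ¬IsSquare (q : ZMod r) := (legendreSym.eq_neg_one_iff' r).mp hleg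
  obtain ⟨k, rfl | rfl⟩ := Int.even_or_odd' z
  · obtain ⟨m, ε, hε, hm⟩ := exists_eq_mul_sq_of_sub_eq p q r hpq hpr hqr hq hr hqr_sq
      (U := 2 * k + 1) (V := 2 * k - 1) (T := t) (c := 2) (by norm_num) (by norm_num)
      (by omega) (by omega) ⟨1 - k, k, by ring⟩ (by ring) (by linear_combination hpell)
    exact ⟨m, ε, hε, Or.inl hm⟩
  · have hpqr_odd : Odd ((p : ℤ) * q * r) := by
      simp only [Int.odd_mul, Int.odd_coe_nat, Nat.odd_iff]
      omega
    have ht : Even t := by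
      have h2 : Even ((2 * k + 1) ^ 2 - p * q * r * t ^ 2 - 1) := by rw [hpell]; decide
      simpa [parity_simps, Int.not_even_iff_odd.mpr hpqr_odd] using h2
    obtain ⟨s, rfl⟩ := ht
    obtain ⟨m, ε, hε, hm⟩ := exists_eq_mul_sq_of_sub_eq p q r hpq hpr hqr hq hr hqr_sq
      (U := k + 1) (V := k) (T := s) (c := 1) one_ne_zero (by norm_num)
      (by omega) (by omega) ⟨1, -1, by ring⟩ (by ring)
      (mul_left_cancel₀ four_ne_zero (by linear_combination hpell))
    exact ⟨m, ε, hε, Or.inr (by linear_combination 2 * hm)⟩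
end

section
/- Let p, q, r be distinct prime numbers with p ≡ 3 (mod 4), q ≡ 3 (mod 4), r ≡ 1 (mod 8), Legendre symbol (p/r) = 1 and Legendre symbol (q/r) = −1. Suppose z and t are integers with z > 0 satisfying z² − pqr·t² = 4. Then there exist an integer m and ε ∈ {1, p, qr, pqr} such that z + 2 = ε·m², or z + 2 = 2·ε·m², or z + 2 = 4·ε·m². -/
/-!
Write `z + 2 = g X` and `z - 2 = g Y` with `g = gcd (z + 2) (z - 2)`, a divisor of `4`. Since `pqr`
is odd, `g ∣ t`, so the coprime `X, Y` satisfy `X Y = pqr s²`; hence `X = A u²`, `Y = B v²` with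
`A B = pqr` and `A u² - B v² = 4 / g ∈ {1, 2, 4}`. Of the eight divisors `A` of `pqr`, the four
for which exactly one of `q, r` divides `A` are impossible: reducing `A u² - B v² = c` modulo the
prime `ℓ ∈ {p, q, r}` dividing `B` (resp. `A`) gives `(A/ℓ) = (c/ℓ)` (resp. `(-B/ℓ) = (c/ℓ)`),
which contradicts the given Legendre symbols and quadratic reciprocity, except for `c = 2` with
`A ≡ B ≡ 1 (mod 4)`, which is impossible modulo `4`.
-/
theorem Nat.exists_eq_mul_sq_of_coprime {X Y k s : ℕ} (hk : k ≠ 0) (hXY : X.Coprime Y)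
    (h : X * Y = k * s ^ 2) : ∃ A B u v : ℕ, A * B = k ∧ X = A * u ^ 2 ∧ Y = B * v ^ 2 := by
  have hAB : X.gcd k * Y.gcd k = k := by
    rw [Nat.gcd_comm, Nat.gcd_comm Y, ← hXY.gcd_mul k, Nat.gcd_eq_left ⟨s ^ 2, h⟩]
  obtain ⟨X', hX⟩ := Nat.gcd_dvd_left X k
  obtain ⟨Y', hY⟩ := Nat.gcd_dvd_left Y k
  have hX'Y' : X' * Y' = s ^ 2 := by
    apply Nat.eq_of_mul_eq_mul_left (Nat.pos_of_ne_zero hk)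
    calc k * (X' * Y') = X.gcd k * X' * (Y.gcd k * Y') := by rw [mul_mul_mul_comm, hAB]
      _ = k * s ^ 2 := by rw [← hX, ← hY, h]
  have hcop : X'.Coprime Y' :=
    (hXY.coprime_dvd_left (Dvd.intro_left _ hX.symm)).coprime_dvd_right
      (Dvd.intro_left _ hY.symm)
  obtain ⟨u, rfl⟩ := exists_eq_pow_of_mul_eq_pow (Nat.isUnit_iff.2 hcop) hX'Y'
  obtain ⟨v, rfl⟩ :=
    exists_eq_pow_of_mul_eq_pow (Nat.isUnit_iff.2 hcop.symm) ((mul_comm _ _).trans hX'Y')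
  exact ⟨_, _, u, v, hAB, hX, hY⟩

theorem Nat.eq_of_dvd_mul_mul_of_prime {p q r A : ℕ} (hp : p.Prime) (hq : q.Prime)
    (hr : r.Prime) (h : A ∣ p * q * r) :
    A = 1 ∨ A = p ∨ A = q ∨ A = r ∨ A = p * q ∨ A = p * r ∨ A = q * r ∨ A = p * q * r := by
  obtain ⟨ab, c, hab, hc, rfl⟩ := Nat.dvd_mul.mp h
  obtain ⟨a, b, ha, hb, rfl⟩ := Nat.dvd_mul.mp hab
  rcases (Nat.dvd_prime hp).1 ha with rfl | rfl <;>
    rcases (Nat.dvd_prime hq).1 hb with rfl | rfl <;>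
    rcases (Nat.dvd_prime hr).1 hc with rfl | rfl <;> simp

theorem Nat.exists_coprime_of_add_four_mul_self_eq {m k T : ℕ} (hk : Odd k)
    (h : (m + 4) * m = k * T ^ 2) :
    ∃ g X Y s, g ∣ 4 ∧ X.Coprime Y ∧ X * Y = k * s ^ 2 ∧ m + 4 = g * X ∧ m = g * Y := by
  obtain ⟨X, Y, hXY, hX, hY⟩ := Nat.exists_coprime (m + 4) m
  have hg4 : (m + 4).gcd m ∣ 4 := by
    simpa using Nat.dvd_sub (Nat.gcd_dvd_left (m + 4) m) (Nat.gcd_dvd_right (m + 4) m)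
  have hg0 : 0 < (m + 4).gcd m := Nat.gcd_pos_of_pos_left _ (by omega)
  generalize (m + 4).gcd m = g at *
  have hgk : (g ^ 2).Coprime k :=
    ((Nat.coprime_two_left.2 hk).pow_left 2 |>.coprime_dvd_left hg4).pow_left 2
  obtain ⟨s, rfl⟩ : g ∣ T := by
    refine (Nat.pow_dvd_pow_iff two_ne_zero).1 (hgk.dvd_of_dvd_mul_left ⟨X * Y, ?_⟩)
    rw [← h, hX, hY]; ring
  refine ⟨g, X, Y, s, hg4, hXY, ?_, hX.trans (mul_comm _ _), hY.trans (mul_comm _ _)⟩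
  apply Nat.eq_of_mul_eq_mul_left (pow_pos hg0 2)
  calc g ^ 2 * (X * Y) = (m + 4) * m := by rw [hX, hY]; ring
    _ = g ^ 2 * (k * s ^ 2) := by rw [h]; ring

theorem Int.mul_sq_sub_mul_sq_ne_two {A B : ℕ} (hA : A % 4 = 1) (hB : B % 4 = 1) (u v : ℤ) :
    (A : ℤ) * u ^ 2 - B * v ^ 2 ≠ 2 := by
  intro h
  have h4 := congrArg (Int.cast : ℤ → ZMod 4) h
  push_cast at h4
  rw [← ZMod.natCast_mod A, ← ZMod.natCast_mod B, hA, hB] at h4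
  generalize (u : ZMod 4) = x, (v : ZMod 4) = y at h4
  revert x y
  decide

theorem legendreSym_eq_of_mul_sq_sub_mul_sq (ℓ : ℕ) [Fact ℓ.Prime] {A B u v c : ℤ}
    (hB : (ℓ : ℤ) ∣ B) (hc : ¬ (ℓ : ℤ) ∣ c) (h : A * u ^ 2 - B * v ^ 2 = c) :
    legendreSym ℓ A = legendreSym ℓ c := by
  have hcA : (c : ZMod ℓ) = A * u ^ 2 := by
    rw [← h]; push_cast; rw [(ZMod.intCast_zmod_eq_zero_iff_dvd B ℓ).2 hB]; ring
  have hu : (u : ZMod ℓ) ≠ 0 := by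
    intro hu
    apply hc
    rw [← ZMod.intCast_zmod_eq_zero_iff_dvd, hcA, hu]
    ring
  simp only [legendreSym, hcA, map_mul, map_pow, quadraticChar_sq_one hu, mul_one]

theorem legendreSym_neg_one_mul_eq_of_mul_sq_sub_mul_sq (ℓ : ℕ) [Fact ℓ.Prime] {A B u v c : ℤ}
    (hA : (ℓ : ℤ) ∣ A) (hc : ¬ (ℓ : ℤ) ∣ c) (h : A * u ^ 2 - B * v ^ 2 = c) :
    legendreSym ℓ (-1) * legendreSym ℓ B = legendreSym ℓ c := by
  rw [← legendreSym.mul, neg_one_mul]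
  exact legendreSym_eq_of_mul_sq_sub_mul_sq ℓ (A := -B) (u := v) (v := u) (dvd_neg.2 hA) hc
    (by linear_combination h)

theorem Nat.Prime.intCast_not_dvd_of_dvd_four {ℓ : ℕ} (hℓ : ℓ.Prime) (hℓ2 : ℓ ≠ 2) {c : ℤ}
    (hc : c ∣ 4) : ¬ (ℓ : ℤ) ∣ c := fun h =>
  hℓ2 <| (Nat.prime_dvd_prime_iff_eq hℓ Nat.prime_two).1 <|
    hℓ.dvd_of_dvd_pow (n := 2) (Int.natCast_dvd_natCast.1 (h.trans hc))

theorem legendreSym_eq_one_of_eq_one_or_eq_four (ℓ : ℕ) [Fact ℓ.Prime] (hℓ : ℓ ≠ 2) {c : ℤ}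
    (hc : c = 1 ∨ c = 4) : legendreSym ℓ c = 1 := by
  rcases hc with rfl | rfl
  · exact legendreSym.at_one ℓ
  have h2 : ((2 : ℤ) : ZMod ℓ) ≠ 0 := by
    rw [Ne, ZMod.intCast_zmod_eq_zero_iff_dvd]
    exact Nat.Prime.intCast_not_dvd_of_dvd_four Fact.out hℓ (by norm_num)
  simpa using legendreSym.sq_one' ℓ h2

theorem legendreSym_eq_one_of_mod_eight_eq_one {r : ℕ} [Fact r.Prime] (hr : r % 8 = 1) {c : ℤ}
    (hc : c = 1 ∨ c = 2 ∨ c = 4) : legendreSym r c = 1 := by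
  have hr2 : r ≠ 2 := by rintro rfl; norm_num at hr
  rcases hc with hc | rfl | hc
  · exact legendreSym_eq_one_of_eq_one_or_eq_four r hr2 (Or.inl hc)
  · rw [legendreSym.at_two hr2, ZMod.χ₈_nat_mod_eight, hr]; rfl
  · exact legendreSym_eq_one_of_eq_one_or_eq_four r hr2 (Or.inr hc)

theorem natCast_mem_of_mul_sq_sub_mul_sq_eq {p q r : ℕ} [Fact p.Prime] [Fact q.Prime]
    [Fact r.Prime] (hp : p % 4 = 3) (hq : q % 4 = 3) (hr : r % 8 = 1)
    (hlegp : legendreSym r p = 1) (hlegq : legendreSym r q = -1)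
    {A B : ℕ} (hAB : A * B = p * q * r) {u v c : ℤ} (hc : c = 1 ∨ c = 2 ∨ c = 4)
    (h : A * u ^ 2 - B * v ^ 2 = c) :
    (A : ℤ) ∈ ({1, (p : ℤ), (q : ℤ) * r, (p : ℤ) * q * r} : Set ℤ) := by
  have hp0 : p ≠ 0 := Nat.Prime.ne_zero Fact.out
  have hq0 : q ≠ 0 := Nat.Prime.ne_zero Fact.out
  have hr0 : r ≠ 0 := Nat.Prime.ne_zero Fact.out
  have hp2 : p ≠ 2 := by rintro rfl; norm_num at hp
  have hq2 : q ≠ 2 := by rintro rfl; norm_num at hq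
  have hr2 : r ≠ 2 := by rintro rfl; norm_num at hr
  have hr4 : r % 4 = 1 := by omega
  have hpq4 : p * q % 4 = 1 := by rw [Nat.mul_mod, hp, hq]
  have hnd : ∀ ℓ : ℕ, ℓ.Prime → ℓ ≠ 2 → ¬ (ℓ : ℤ) ∣ c := fun ℓ hℓ hℓ2 =>
    hℓ.intCast_not_dvd_of_dvd_four hℓ2 (by rcases hc with rfl | rfl | rfl <;> norm_num)
  have hcr : legendreSym r c = 1 := legendreSym_eq_one_of_mod_eight_eq_one hr hc
  have hqr : legendreSym q r = -1 :=
    (legendreSym.quadratic_reciprocity_one_mod_four hr4 hq2).trans hlegq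
  have hpr : legendreSym p r = 1 :=
    (legendreSym.quadratic_reciprocity_one_mod_four hr4 hp2).trans hlegp
  rcases Nat.eq_of_dvd_mul_mul_of_prime Fact.out Fact.out Fact.out (Dvd.intro B hAB) with
    rfl | rfl | rfl | rfl | rfl | rfl | rfl | rfl
  · simp
  · simp
  · obtain rfl : B = p * r := mul_left_cancel₀ hq0 (by rw [hAB]; ring)
    have := legendreSym_eq_of_mul_sq_sub_mul_sq r (by push_cast; exact dvd_mul_left _ _)
      (hnd r Fact.out hr2) h
    rw [hlegq, hcr] at this
    norm_num at this
  · obtain rfl : B = p * q := mul_left_cancel₀ hr0 (by rw [hAB]; ring)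
    have hc2 : c ≠ 2 := by rintro rfl; exact Int.mul_sq_sub_mul_sq_ne_two hr4 hpq4 u v h
    have := legendreSym_eq_of_mul_sq_sub_mul_sq q (by push_cast; exact dvd_mul_left _ _)
      (hnd q Fact.out hq2) h
    rw [hqr, legendreSym_eq_one_of_eq_one_or_eq_four q hq2 (by tauto)] at this
    norm_num at this
  · obtain rfl : B = r := mul_left_cancel₀ (mul_ne_zero hp0 hq0) hAB
    have hc2 : c ≠ 2 := by rintro rfl; exact Int.mul_sq_sub_mul_sq_ne_two hpq4 hr4 u v h
    have := legendreSym_neg_one_mul_eq_of_mul_sq_sub_mul_sq p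
      (by push_cast; exact dvd_mul_right _ _) (hnd p Fact.out hp2) h
    rw [legendreSym.at_neg_one hp2, ZMod.χ₄_nat_three_mod_four hp, hpr,
      legendreSym_eq_one_of_eq_one_or_eq_four p hp2 (by tauto)] at this
    norm_num at this
  · obtain rfl : B = q := mul_left_cancel₀ (mul_ne_zero hp0 hr0) (by rw [hAB]; ring)
    have := legendreSym_neg_one_mul_eq_of_mul_sq_sub_mul_sq r
      (by push_cast; exact dvd_mul_left _ _) (hnd r Fact.out hr2) h
    rw [legendreSym.at_neg_one hr2, ZMod.χ₄_nat_one_mod_four hr4, hlegq, hcr] at this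
    norm_num at this
  · simp
  · simp

theorem norm_one_unit_square_class'_general (p q r : ℕ)
    [Fact p.Prime] [Fact q.Prime] [Fact r.Prime]
    (hp : p % 4 = 3) (hq : q % 4 = 3) (hr : r % 8 = 1)
    (hlegp : legendreSym r (p : ℤ) = 1) (hlegq : legendreSym r (q : ℤ) = -1)
    (z t : ℤ) (hz : 0 < z) (hpell : z ^ 2 - (p : ℤ) * q * r * t ^ 2 = 4) :
    ∃ m : ℤ, ∃ ε ∈ ({1, (p : ℤ), (q : ℤ) * r, (p : ℤ) * q * r} : Set ℤ),
      z + 2 = ε * m ^ 2 ∨ z + 2 = 2 * ε * m ^ 2 ∨ z + 2 = 4 * ε * m ^ 2 := by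
  have hk : Odd (p * q * r) :=
    Nat.odd_mul.2 ⟨Nat.odd_mul.2 ⟨Nat.odd_iff.2 (by omega), Nat.odd_iff.2 (by omega)⟩,
      Nat.odd_iff.2 (by omega)⟩
  have hz2 : 2 ≤ z := by nlinarith [show (0 : ℤ) ≤ p * q * r * t ^ 2 by positivity]
  obtain ⟨m, rfl⟩ : ∃ m : ℕ, z = m + 2 := ⟨(z - 2).toNat, by omega⟩
  have hmt : (m + 4) * m = p * q * r * t.natAbs ^ 2 := by
    have : ((m : ℤ) + 4) * m = p * q * r * (t.natAbs : ℤ) ^ 2 := by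
      rw [Int.natAbs_sq]; linear_combination hpell
    exact_mod_cast this
  obtain ⟨g, X, Y, s, hg, hXY, hprod, hX, hY⟩ :=
    Nat.exists_coprime_of_add_four_mul_self_eq hk hmt
  obtain ⟨A, B, u, v, hAB, rfl, rfl⟩ := Nat.exists_eq_mul_sq_of_coprime hk.pos.ne' hXY hprod
  obtain ⟨i, hi, rfl⟩ := (Nat.dvd_prime_pow (m := 2) Nat.prime_two).1 hg
  have hX' : (m : ℤ) + 4 = 2 ^ i * (A * u ^ 2) := by exact_mod_cast hX
  have hY' : (m : ℤ) = 2 ^ i * (B * v ^ 2) := by exact_mod_cast hY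
  have hdiff : (2 : ℤ) ^ i * (A * u ^ 2 - B * v ^ 2) = 4 := by linear_combination hY' - hX'
  have hc : (A : ℤ) * u ^ 2 - B * v ^ 2 = 1 ∨ (A : ℤ) * u ^ 2 - B * v ^ 2 = 2 ∨
      (A : ℤ) * u ^ 2 - B * v ^ 2 = 4 := by
    interval_cases i <;> norm_num at hdiff <;> omega
  refine ⟨u, A, natCast_mem_of_mul_sq_sub_mul_sq_eq hp hq hr hlegp hlegq hAB hc rfl, ?_⟩
  interval_cases i
  · exact Or.inl (by linear_combination hX')
  · exact Or.inr (Or.inl (by linear_combination hX'))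
  · exact Or.inr (Or.inr (by linear_combination hX'))

theorem norm_one_unit_square_class' (p q r : ℕ)
    [Fact p.Prime] [Fact q.Prime] [Fact r.Prime]
    (hpq : p ≠ q) (hpr : p ≠ r) (hqr : q ≠ r)
    (hp : p % 4 = 3) (hq : q % 4 = 3) (hr : r % 8 = 1)
    (hlegp : legendreSym r (p : ℤ) = 1) (hlegq : legendreSym r (q : ℤ) = -1)
    (z t : ℤ) (hz : 0 < z) (hpell : z ^ 2 - (p : ℤ) * q * r * t ^ 2 = 4) :
    ∃ m : ℤ, ∃ ε ∈ ({1, (p : ℤ), (q : ℤ) * r, (p : ℤ) * q * r} : Set ℤ),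
      z + 2 = ε * m ^ 2 ∨ z + 2 = 2 * ε * m ^ 2 ∨ z + 2 = 4 * ε * m ^ 2 :=
  norm_one_unit_square_class'_general p q r hp hq hr hlegp hlegq z t hz hpell
end

section
/- Let p and q be distinct prime numbers with p ≡ 1 (mod 4), q ≡ 1 (mod 4), and Legendre symbol (p/q) = −1. Suppose z and t are integers with z > 0 satisfying z² − 2pq·t² = 1. Then there exist an integer m and ε ∈ {1, 2, pq, 2pq} such that z + 1 = 2·ε·m². -/
/-!
Writing `z = 2k + 1`, the Pell equation becomes `k (k + 1) = 2pq s²`. The factors `k` and `k + 1`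
are coprime, so each is a divisor of `2pq` times a square. If `p` and `q` divided different
factors, the odd factor would be `ℓ m²` for one of them, `ℓ`, while the other, `ℓ'`, divides its
neighbour; then `ℓ m² ≡ ±1 (mod ℓ')`, and as `-1` is a square modulo `ℓ' ≡ 1 (mod 4)`, `ℓ` would be
a quadratic residue modulo `ℓ'`. By reciprocity `(p/q) = (q/p) = -1`, so this cannot happen, and
`k + 1` is `1`, `2`, `pq` or `2pq` times a square.
-/

theorem Int.exists_eq_mul_sq_of_isCoprime_s14 {a b ε δ s : ℤ} (h : a * b = ε * δ * s ^ 2)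
    (hab : IsCoprime a b) (hε : ε ∣ a) (hδ : δ ∣ b) (ha : 0 ≤ a) (hε0 : 0 < ε) (hδ0 : δ ≠ 0) :
    ∃ m : ℤ, a = ε * m ^ 2 := by
  obtain ⟨a', rfl⟩ := hε
  obtain ⟨b', rfl⟩ := hδ
  have hsq : a' * b' = s ^ 2 :=
    mul_left_cancel₀ (mul_ne_zero hε0.ne' hδ0) (by linear_combination h)
  obtain ⟨m, hm | hm⟩ := Int.sq_of_isCoprime hab.of_mul_left_right.of_mul_right_right hsq
  · exact ⟨m, by rw [hm]⟩
  · have ha' : a' = 0 := by nlinarith [sq_nonneg m]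
    exact ⟨0, by simp [ha']⟩

theorem exists_mul_add_one_eq_of_sq_sub_two_mul_sq_eq_one {N z t : ℤ} (hN : Odd N)
    (h : z ^ 2 - 2 * N * t ^ 2 = 1) :
    ∃ k s : ℤ, z = 2 * k + 1 ∧ k * (k + 1) = 2 * N * s ^ 2 := by
  obtain ⟨k, rfl⟩ : Odd z := (Int.odd_pow' two_ne_zero).1 ⟨N * t ^ 2, by linear_combination h⟩
  have hkt : 2 * (k * (k + 1)) = N * t ^ 2 := by linarith
  have ht_sq : Even (t ^ 2) :=
    (Int.even_mul.1 ⟨k * (k + 1), by linear_combination -hkt⟩).resolve_left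
      (Int.not_even_iff_odd.2 hN)
  obtain ⟨s, rfl⟩ := (Int.even_pow' two_ne_zero).1 ht_sq
  exact ⟨k, s, rfl, by linarith⟩

theorem legendreSym_eq_one_of_mul_sq_eq_one_or_neg_one {r : ℕ} [Fact r.Prime] (hr : r % 4 = 1)
    {c n : ℤ} (h : ((c * n ^ 2 : ℤ) : ZMod r) = 1 ∨ ((c * n ^ 2 : ℤ) : ZMod r) = -1) :
    legendreSym r c = 1 := by
  have hsq : IsSquare ((c * n ^ 2 : ℤ) : ZMod r) := by
    rcases h with h | h <;> rw [h]
    exacts [IsSquare.one, ZMod.exists_sq_eq_neg_one_iff.2 (by omega)]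
  have hne : ((c * n ^ 2 : ℤ) : ZMod r) ≠ 0 := by rcases h with h | h <;> simp [h]
  push_cast at hsq hne
  have hn : (n : ZMod r) ^ 2 ≠ 0 := right_ne_zero_of_mul hne
  rw [legendreSym.eq_one_iff r (left_ne_zero_of_mul hne)]
  simpa [hn] using hsq.div (IsSquare.sq (n : ZMod r))

theorem exists_sq_of_consecutive_mul_eq_two_mul_mul_sq {p q : ℕ} [Fact p.Prime] [Fact q.Prime]
    (hpq : p ≠ q) (hp : p % 4 = 1) (hq : q % 4 = 1) (hleg : legendreSym q p = -1)
    {a b s : ℤ} (ha : 0 ≤ a) (hb : 0 ≤ b) (hb2 : 2 ∣ b) (hab : a = b + 1 ∨ b = a + 1)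
    (h : a * b = 2 * p * q * s ^ 2) :
    ∃ m n : ℤ, (a = m ^ 2 ∧ b = 2 * p * q * n ^ 2) ∨ (a = p * q * m ^ 2 ∧ b = 2 * n ^ 2) := by
  have hpP : p.Prime := Fact.out
  have hqP : q.Prime := Fact.out
  have hp0 : (0 : ℤ) < p := mod_cast hpP.pos
  have hq0 : (0 : ℤ) < q := mod_cast hqP.pos
  have cpq : IsCoprime (p : ℤ) q :=
    Nat.isCoprime_iff_coprime.2 ((Nat.coprime_primes hpP hqP).2 hpq)
  have c2p : IsCoprime (2 : ℤ) p := mod_cast Nat.isCoprime_iff_coprime.2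
    (Nat.coprime_two_left.2 (Nat.odd_iff.2 (Nat.odd_of_mod_four_eq_one hp)))
  have c2q : IsCoprime (2 : ℤ) q := mod_cast Nat.isCoprime_iff_coprime.2
    (Nat.coprime_two_left.2 (Nat.odd_iff.2 (Nat.odd_of_mod_four_eq_one hq)))
  have hcop : IsCoprime a b := by
    rcases hab with rfl | rfl
    exacts [⟨1, -1, by ring⟩, ⟨-1, 1, by ring⟩]
  have ha_unit : ∀ r : ℕ, (r : ℤ) ∣ b → (a : ZMod r) = 1 ∨ (a : ZMod r) = -1 := by
    intro r hr
    have hb0 : (b : ZMod r) = 0 := (ZMod.intCast_zmod_eq_zero_iff_dvd b r).2 hr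
    rcases hab with rfl | rfl
    · exact Or.inl (by push_cast; simp [hb0])
    · exact Or.inr (by push_cast at hb0; linear_combination hb0)
  have hleg' : legendreSym p q = -1 := by
    rwa [← legendreSym.quadratic_reciprocity_one_mod_four hp (by omega)]
  rcases Int.Prime.dvd_mul' hpP (m := a) (n := b) ⟨2 * q * s ^ 2, by linear_combination h⟩
    with hpa | hpb <;>
  rcases Int.Prime.dvd_mul' hqP (m := a) (n := b) ⟨2 * p * s ^ 2, by linear_combination h⟩
    with hqa | hqb
  · obtain ⟨m, hm⟩ := Int.exists_eq_mul_sq_of_isCoprime_s14 (ε := p * q) (δ := 2) (s := s)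
      (by linear_combination h) hcop (cpq.mul_dvd hpa hqa) hb2 ha (by positivity) two_ne_zero
    obtain ⟨n, hn⟩ := Int.exists_eq_mul_sq_of_isCoprime_s14 (ε := 2) (δ := p * q) (s := s)
      (by linear_combination h) hcop.symm hb2 (cpq.mul_dvd hpa hqa) hb two_pos (by positivity)
    exact ⟨m, n, Or.inr ⟨hm, hn⟩⟩
  · obtain ⟨m, rfl⟩ := Int.exists_eq_mul_sq_of_isCoprime_s14 (ε := p) (δ := 2 * q) (s := s)
      (by linear_combination h) hcop hpa (c2q.mul_dvd hb2 hqb) ha hp0 (by positivity)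
    have := legendreSym_eq_one_of_mul_sq_eq_one_or_neg_one hq (ha_unit q hqb)
    simp [this] at hleg
  · obtain ⟨m, rfl⟩ := Int.exists_eq_mul_sq_of_isCoprime_s14 (ε := q) (δ := 2 * p) (s := s)
      (by linear_combination h) hcop hqa (c2p.mul_dvd hb2 hpb) ha hq0 (by positivity)
    have := legendreSym_eq_one_of_mul_sq_eq_one_or_neg_one hp (ha_unit p hpb)
    simp [this] at hleg'
  · have hb' : 2 * (p * q : ℤ) ∣ b := (c2p.mul_right c2q).mul_dvd hb2 (cpq.mul_dvd hpb hqb)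
    obtain ⟨m, hm⟩ := Int.exists_eq_mul_sq_of_isCoprime_s14 (ε := 1) (δ := 2 * (p * q)) (s := s)
      (by linear_combination h) hcop (one_dvd a) hb' ha one_pos (by positivity)
    obtain ⟨n, hn⟩ := Int.exists_eq_mul_sq_of_isCoprime_s14 (ε := 2 * (p * q)) (δ := 1) (s := s)
      (by linear_combination h) hcop.symm hb' (one_dvd a) hb (by positivity) one_ne_zero
    exact ⟨m, n, Or.inl ⟨by linear_combination hm, by linear_combination hn⟩⟩

theorem norm_one_unit_square_class'' (p q : ℕ)
    [Fact p.Prime] [Fact q.Prime] (hpq : p ≠ q)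
    (hp : p % 4 = 1) (hq : q % 4 = 1)
    (hleg : legendreSym q (p : ℤ) = -1)
    (z t : ℤ) (hz : 0 < z) (hpell : z ^ 2 - 2 * (p : ℤ) * q * t ^ 2 = 1) :
    ∃ m : ℤ, ∃ ε ∈ ({1, 2, (p : ℤ) * q, 2 * (p : ℤ) * q} : Set ℤ),
      z + 1 = 2 * ε * m ^ 2 := by
  have hodd : Odd ((p : ℤ) * q) := by
    exact_mod_cast (Nat.odd_iff.2 (Nat.odd_of_mod_four_eq_one hp)).mul
      (Nat.odd_iff.2 (Nat.odd_of_mod_four_eq_one hq))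
  obtain ⟨k, s, rfl, hks⟩ := exists_mul_add_one_eq_of_sq_sub_two_mul_sq_eq_one
    (N := p * q) (z := z) (t := t) hodd (by linear_combination hpell)
  have hk : 0 ≤ k := by omega
  rcases Int.even_or_odd k with hk_even | hk_odd
  · obtain ⟨m, -, ⟨hm, -⟩ | ⟨hm, -⟩⟩ :=
      exists_sq_of_consecutive_mul_eq_two_mul_mul_sq (s := s) hpq hp hq hleg (by omega) hk
        hk_even.two_dvd (Or.inl rfl) (by linear_combination hks)
    · exact ⟨m, 1, by simp, by linear_combination 2 * hm⟩
    · exact ⟨m, p * q, by simp, by linear_combination 2 * hm⟩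
  · obtain ⟨-, n, ⟨-, hn⟩ | ⟨-, hn⟩⟩ :=
      exists_sq_of_consecutive_mul_eq_two_mul_mul_sq (s := s) hpq hp hq hleg hk (by omega)
        hk_odd.add_one.two_dvd (Or.inr rfl) (by linear_combination hks)
    · exact ⟨n, 2 * p * q, by simp, by linear_combination 2 * hn⟩
    · exact ⟨n, 2, by simp, by linear_combination 2 * hn⟩
end

section
/- Let p and q be distinct prime numbers with p ≡ 1 (mod 4), q ≡ 1 (mod 4), and Legendre symbol (p/q) = −1. Then there are no integers m, n satisfying any of the equations m²·p − 2n²·q = 1, m²·q − 2n²·p = 1, 2m²·p − n²·q = 1, or 2m²·q − n²·p = 1. -/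
/-!
Reduce each equation modulo the prime carrying the factor `2`: the other prime times a
nonzero square becomes `1` or `-1`, so it would be a quadratic residue (for `-1`, because
`p ≡ q ≡ 1 mod 4`). By quadratic reciprocity neither `p` mod `q` nor `q` mod `p` is a residue.
-/

namespace legendreSym

variable {ℓ : ℕ} [Fact ℓ.Prime] {m r s : ℤ}

theorem eq_of_sq_mul_modEq (h : m ^ 2 * r ≡ s [ZMOD ℓ]) (hs : (s : ZMod ℓ) ≠ 0) :
    legendreSym ℓ r = legendreSym ℓ s := by
  have hcast : ((m ^ 2 * r : ℤ) : ZMod ℓ) = s := (ZMod.intCast_eq_intCast_iff _ _ _).2 h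
  have hm : (m : ZMod ℓ) ≠ 0 := by
    rintro hm
    apply hs
    simp [← hcast, hm]
  calc legendreSym ℓ r = legendreSym ℓ (m ^ 2) * legendreSym ℓ r := by
        rw [legendreSym.sq_one' ℓ hm, one_mul]
    _ = legendreSym ℓ (m ^ 2 * r) := (legendreSym.mul ℓ _ _).symm
    _ = legendreSym ℓ s := by rw [legendreSym.mod ℓ, h, ← legendreSym.mod ℓ]

theorem eq_one_of_sq_mul_modEq_one (h : m ^ 2 * r ≡ 1 [ZMOD ℓ]) : legendreSym ℓ r = 1 := by
  rw [eq_of_sq_mul_modEq h (by simp), legendreSym.at_one]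

theorem eq_one_of_sq_mul_modEq_neg_one (hℓ : ℓ % 4 = 1) (h : m ^ 2 * r ≡ -1 [ZMOD ℓ]) :
    legendreSym ℓ r = 1 := by
  rw [eq_of_sq_mul_modEq h (by simp), legendreSym.at_neg_one (by omega),
    ZMod.χ₄_nat_one_mod_four hℓ]

end legendreSym

theorem no_solutions_four_equations_general (p q : ℕ)
    [Fact p.Prime] [Fact q.Prime]
    (hp : p % 4 = 1) (hq : q % 4 = 1)
    (hleg : legendreSym q (p : ℤ) = -1) :
    (¬ ∃ m n : ℤ, m ^ 2 * p - 2 * n ^ 2 * q = 1) ∧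
    (¬ ∃ m n : ℤ, m ^ 2 * q - 2 * n ^ 2 * p = 1) ∧
    (¬ ∃ m n : ℤ, 2 * m ^ 2 * p - n ^ 2 * q = 1) ∧
    (¬ ∃ m n : ℤ, 2 * m ^ 2 * q - n ^ 2 * p = 1) := by
  have hleg' : legendreSym p (q : ℤ) = -1 := by
    rwa [← legendreSym.quadratic_reciprocity_one_mod_four hp (by omega)]
  refine ⟨?_, ?_, ?_, ?_⟩ <;> rintro ⟨m, n, h⟩
  · have hmod : m ^ 2 * p ≡ 1 [ZMOD q] := Int.modEq_iff_dvd.2 ⟨-2 * n ^ 2, by linear_combination -h⟩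
    simp [legendreSym.eq_one_of_sq_mul_modEq_one hmod] at hleg
  · have hmod : m ^ 2 * q ≡ 1 [ZMOD p] := Int.modEq_iff_dvd.2 ⟨-2 * n ^ 2, by linear_combination -h⟩
    simp [legendreSym.eq_one_of_sq_mul_modEq_one hmod] at hleg'
  · have hmod : n ^ 2 * q ≡ -1 [ZMOD p] := Int.modEq_iff_dvd.2 ⟨-2 * m ^ 2, by linear_combination h⟩
    simp [legendreSym.eq_one_of_sq_mul_modEq_neg_one hp hmod] at hleg'
  · have hmod : n ^ 2 * p ≡ -1 [ZMOD q] := Int.modEq_iff_dvd.2 ⟨-2 * m ^ 2, by linear_combination h⟩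
    simp [legendreSym.eq_one_of_sq_mul_modEq_neg_one hq hmod] at hleg

theorem no_solutions_four_equations (p q : ℕ)
    [Fact p.Prime] [Fact q.Prime] (hpq : p ≠ q)
    (hp : p % 4 = 1) (hq : q % 4 = 1)
    (hleg : legendreSym q (p : ℤ) = -1) :
    (¬ ∃ m n : ℤ, m ^ 2 * p - 2 * n ^ 2 * q = 1) ∧
    (¬ ∃ m n : ℤ, m ^ 2 * q - 2 * n ^ 2 * p = 1) ∧
    (¬ ∃ m n : ℤ, 2 * m ^ 2 * p - n ^ 2 * q = 1) ∧
    (¬ ∃ m n : ℤ, 2 * m ^ 2 * q - n ^ 2 * p = 1) :=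
  no_solutions_four_equations_general p q hp hq hleg
end
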